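/- arXiv:2009.13085 — 3 statements merged into one kernel-verified Lean document; each statement's English description precedes it below -/
import Mathlib

section
/- Let u : ℝ² → ℝ be a smooth function with compact support. Then ‖u‖_{L⁴} ≤ 2^{1/4} ‖u‖_{L²}^{1/2} ‖∇u‖_{L²}^{1/2}, i.e. ‖u‖_{L⁴}⁴ ≤ 2 ‖u‖_{L²}² ‖∇u‖_{L²}² (Ladyzhenskaya's inequality in dimension 2, with the explicit constant C = 2). -/
open MeasureTheory ENNReal NNReal Set

/-- AM–GM for two `ℝ≥0∞` numbers, in the form `2 √a √b ≤ a + b`. -/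
lemma two_mul_geom_mean_le_add_ennreal (a b : ℝ≥0∞) :
    2 * (a ^ ((1:ℝ)/2) * b ^ ((1:ℝ)/2)) ≤ a + b := by
  rcases eq_or_ne a ⊤ with ha | ha
  · rcases eq_or_ne b 0 with hb | hb
    · simp [hb, ENNReal.zero_rpow_of_pos (by norm_num : (0:ℝ) < 1/2)]
    · rw [ha, top_add]; exact le_top
  · rcases eq_or_ne b ⊤ with hb | hb
    · rcases eq_or_ne a 0 with ha0 | ha0
      · simp [ha0, ENNReal.zero_rpow_of_pos (by norm_num : (0:ℝ) < 1/2)]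
      · rw [hb, add_top]; exact le_top
    · lift a to ℝ≥0 using ha
      lift b to ℝ≥0 using hb
      rw [← ENNReal.coe_rpow_of_nonneg _ (by norm_num : (0:ℝ) ≤ 1/2),
        ← ENNReal.coe_rpow_of_nonneg _ (by norm_num : (0:ℝ) ≤ 1/2),
        ← ENNReal.coe_mul, ← ENNReal.coe_add,
        show ((2:ℝ≥0∞)) = ((2:ℝ≥0) : ℝ≥0∞) by norm_cast, ← ENNReal.coe_mul,
        ENNReal.coe_le_coe]
      have h := NNReal.geom_mean_le_arith_mean2_weighted (1/2) (1/2) a b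
        (by rw [show (1/2 : ℝ≥0) = 2⁻¹ by norm_num, ← two_mul]; exact mul_inv_cancel₀ two_ne_zero)
      have h2 : ((1/2 : ℝ≥0) : ℝ) = (1/2 : ℝ) := by norm_num
      rw [h2] at h
      calc 2 * (a ^ ((1:ℝ)/2) * b ^ ((1:ℝ)/2)) ≤ 2 * ((1/2 : ℝ≥0) * a + (1/2 : ℝ≥0) * b) := by
            gcongr
        _ = a + b := by
            apply NNReal.coe_injective; push_cast; ring

/-- A continuous linear functional on `ℝ²` satisfies `ℓ(e₀)² + ℓ(e₁)² ≤ ‖ℓ‖²`. -/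
lemma sum_sq_apply_le (ℓ : EuclideanSpace ℝ (Fin 2) →L[ℝ] ℝ) :
    ℓ (EuclideanSpace.single 0 1) ^ 2 + ℓ (EuclideanSpace.single 1 1) ^ 2 ≤ ‖ℓ‖ ^ 2 := by
  set a := ℓ (EuclideanSpace.single 0 1) with ha
  set b := ℓ (EuclideanSpace.single 1 1) with hb
  set V : EuclideanSpace ℝ (Fin 2) :=
    a • EuclideanSpace.single 0 (1:ℝ) + b • EuclideanSpace.single 1 (1:ℝ) with hV
  have hV0 : V 0 = a := by simp [hV, EuclideanSpace.single_apply]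
  have hV1 : V 1 = b := by simp [hV, EuclideanSpace.single_apply]
  have hnV : ‖V‖ = Real.sqrt (a ^ 2 + b ^ 2) := by
    rw [EuclideanSpace.norm_eq, Fin.sum_univ_two, hV0, hV1]
    simp [Real.norm_eq_abs, sq_abs]
  have hLV : ℓ V = a ^ 2 + b ^ 2 := by
    simp only [hV, ℓ.map_add, ℓ.map_smul, smul_eq_mul, ← ha, ← hb]
    ring
  have h := ℓ.le_opNorm V
  rw [hLV, hnV, Real.norm_eq_abs, abs_of_nonneg (by positivity : (0:ℝ) ≤ a ^ 2 + b ^ 2)] at h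
  have hs : Real.sqrt (a ^ 2 + b ^ 2) ^ 2 = a ^ 2 + b ^ 2 :=
    Real.sq_sqrt (by positivity)
  nlinarith [Real.sqrt_nonneg (a ^ 2 + b ^ 2), norm_nonneg ℓ,
    sq_nonneg (Real.sqrt (a ^ 2 + b ^ 2) - ‖ℓ‖)]

/-- Pointwise bound: sum of squares of the two partial derivatives is at most the square
of the operator norm, in `ℝ≥0∞`. -/
lemma sum_sq_apply_le_ennreal (ℓ : EuclideanSpace ℝ (Fin 2) →L[ℝ] ℝ) :
    (‖ℓ (EuclideanSpace.single 0 1)‖₊ : ℝ≥0∞) ^ (2:ℝ)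
      + (‖ℓ (EuclideanSpace.single 1 1)‖₊ : ℝ≥0∞) ^ (2:ℝ) ≤ (‖ℓ‖₊ : ℝ≥0∞) ^ (2:ℝ) := by
  rw [show ((2:ℝ)) = ((2:ℕ):ℝ) by norm_num, ENNReal.rpow_natCast, ENNReal.rpow_natCast,
    ENNReal.rpow_natCast, ← ENNReal.coe_pow, ← ENNReal.coe_pow, ← ENNReal.coe_pow,
    ← ENNReal.coe_add, ENNReal.coe_le_coe, ← NNReal.coe_le_coe]
  push_cast
  simp only [coe_nnnorm, Real.norm_eq_abs, sq_abs]
  exact sum_sq_apply_le ℓ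

/-- Ladyzhenskaya's inequality in dimension 2 with explicit constant `C = 2`:
for a smooth compactly supported `u : ℝ² → ℝ`,
`‖u‖_{L⁴} ≤ 2^(1/4) ‖u‖_{L²}^(1/2) ‖∇u‖_{L²}^(1/2)`. -/
theorem ladyzhenskaya_dim_two (u : EuclideanSpace ℝ (Fin 2) → ℝ)
    (hu : ContDiff ℝ (⊤ : ℕ∞) u) (hsupp : HasCompactSupport u) :
    eLpNorm u 4 volume ≤
      (2 : ℝ≥0∞) ^ ((1 : ℝ) / 4) * eLpNorm u 2 volume ^ ((1 : ℝ) / 2) *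
        eLpNorm (fun x => ‖fderiv ℝ u x‖) 2 volume ^ ((1 : ℝ) / 2) := by
  classical
  -- identification of `ℝ²` with `Fin 2 → ℝ`
  set eL : (Fin 2 → ℝ) ≃L[ℝ] EuclideanSpace ℝ (Fin 2) :=
    (PiLp.continuousLinearEquiv 2 ℝ (fun _ : Fin 2 => ℝ)).symm with heL_def
  set v : (Fin 2 → ℝ) → ℝ := fun y => u (eL y) with hv_def
  have hv : ContDiff ℝ 1 v := (hu.of_le (by simp)).comp eL.contDiff
  have hv2 : HasCompactSupport v := hsupp.comp_homeomorph eL.toHomeomorph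
  set w : (Fin 2 → ℝ) → ℝ := fun y => v y * v y with hw_def
  have hw : ContDiff ℝ 1 w := hv.mul hv
  have hw2 : HasCompactSupport w := hv2.mul_right
  -- derivative of `w`
  have hdw : ∀ y, fderiv ℝ w y = (2 * v y) • fderiv ℝ v y := by
    intro y
    have h1 : DifferentiableAt ℝ v y := (hv.differentiable one_ne_zero) y
    have : fderiv ℝ (fun y => v y * v y) y = v y • fderiv ℝ v y + v y • fderiv ℝ v y :=
      fderiv_mul h1 h1
    rw [hw_def, this, two_mul, add_smul]
  -- partial derivatives
  set d : Fin 2 → (Fin 2 → ℝ) → ℝ≥0∞ :=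
    fun i y => (‖fderiv ℝ v y (Pi.single i 1)‖₊ : ℝ≥0∞) with hd_def
  set g : Fin 2 → (Fin 2 → ℝ) → ℝ≥0∞ :=
    fun i y => (‖fderiv ℝ w y (Pi.single i 1)‖₊ : ℝ≥0∞) with hg_def
  have hfdv : Continuous fun y => fderiv ℝ v y := hv.continuous_fderiv one_ne_zero
  have hfdw : Continuous fun y => fderiv ℝ w y := hw.continuous_fderiv one_ne_zero
  have hdm : ∀ i, Measurable (d i) := fun i =>
    ((hfdv.clm_apply continuous_const).nnnorm.measurable).coe_nnreal_ennreal
  have hgm : ∀ i, Measurable (g i) := fun i =>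
    ((hfdw.clm_apply continuous_const).nnnorm.measurable).coe_nnreal_ennreal
  have hvm : Measurable fun y => (‖v y‖₊ : ℝ≥0∞) :=
    (hv.continuous.nnnorm.measurable).coe_nnreal_ennreal
  -- FTC along coordinate lines
  have key : ∀ (i : Fin 2) (x : Fin 2 → ℝ),
      (‖w x‖₊ : ℝ≥0∞) ≤ ∫⁻ t, g i (Function.update x i t) := by
    intro i x
    have h1 : ContDiff ℝ 1 (w ∘ Function.update x i) :=
      hw.comp (by convert contDiff_update 1 x i)
    have h2 : HasCompactSupport (w ∘ Function.update x i) :=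
      hw2.comp_isClosedEmbedding (isClosedEmbedding_update x i)
    calc (‖w x‖₊ : ℝ≥0∞)
        ≤ ∫⁻ t in Set.Iic (x i), ‖deriv (w ∘ Function.update x i) t‖₊ := by
          have h3 := HasCompactSupport.enorm_le_lintegral_Ici_deriv h1 h2 (x i)
          refine le_trans (le_of_eq ?_) h3
          simp
          rfl
      _ ≤ ∫⁻ t, (‖deriv (w ∘ Function.update x i) t‖₊ : ℝ≥0∞) :=
          lintegral_mono' Measure.restrict_le_self le_rfl
      _ = ∫⁻ t, g i (Function.update x i t) := by
          congr 1; ext t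
          rw [fderiv_comp_deriv _ (hw.differentiable one_ne_zero).differentiableAt
            (hasDerivAt_update x i t).differentiableAt, deriv_update]
  -- quantities
  set A : ℝ≥0∞ := ∫⁻ y, (‖v y‖₊ : ℝ≥0∞) ^ (2:ℝ) with hA_def
  set B : Fin 2 → ℝ≥0∞ := fun i => ∫⁻ y, d i y ^ (2:ℝ) with hB_def
  set D : ℝ≥0∞ := ∫⁻ y, (‖fderiv ℝ u (eL y)‖₊ : ℝ≥0∞) ^ (2:ℝ) with hD_def
  have conj22 : Real.HolderConjugate 2 2 := Real.HolderConjugate.two_two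
  -- Hölder in each direction
  have holder : ∀ i, (∫⁻ y, g i y) ≤ 2 * (A ^ ((1:ℝ)/2) * B i ^ ((1:ℝ)/2)) := by
    intro i
    have heq : ∀ y, g i y = 2 * ((‖v y‖₊ : ℝ≥0∞) * d i y) := by
      intro y
      simp only [hg_def, hd_def]
      rw [hdw y, ContinuousLinearMap.smul_apply, smul_eq_mul, nnnorm_mul, nnnorm_mul]
      push_cast
      rw [Real.nnnorm_two]
      push_cast
      ring
    calc (∫⁻ y, g i y) = 2 * ∫⁻ y, (‖v y‖₊ : ℝ≥0∞) * d i y := by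
          simp_rw [heq]
          exact lintegral_const_mul 2 (hvm.mul (hdm i))
      _ ≤ 2 * (A ^ ((1:ℝ)/2) * B i ^ ((1:ℝ)/2)) := by
          refine mul_le_mul_right ?_ 2
          have := ENNReal.lintegral_mul_le_Lp_mul_Lq volume conj22
            hvm.aemeasurable (hdm i).aemeasurable
          simp only [Pi.mul_apply] at this
          simpa [hA_def, hB_def, one_div] using this
  -- Fubini setup
  have hupd0 : ∀ (x : Fin 2 → ℝ) (t : ℝ), Function.update x 0 t = ![t, x 1] := by
    intro x t; ext j; fin_cases j <;> simp [Function.update]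
  have hupd1 : ∀ (x : Fin 2 → ℝ) (t : ℝ), Function.update x 1 t = ![x 0, t] := by
    intro x t; ext j; fin_cases j <;> simp [Function.update]
  have hsymm : ∀ p : ℝ × ℝ, (MeasurableEquiv.finTwoArrow.symm p : Fin 2 → ℝ) = ![p.1, p.2] := by
    intro p; rfl
  have happ : ∀ x : Fin 2 → ℝ, (MeasurableEquiv.finTwoArrow x : ℝ × ℝ) = (x 0, x 1) := by
    intro x; rfl
  have mp : MeasurePreserving (MeasurableEquiv.finTwoArrow : (Fin 2 → ℝ) ≃ᵐ ℝ × ℝ)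
      volume ((volume : Measure ℝ).prod volume) := by
    have := measurePreserving_finTwoArrow (volume : Measure ℝ)
    rwa [← volume_pi] at this
  have hFm : ∀ i, Measurable fun p : ℝ × ℝ => g i ![p.1, p.2] := by
    intro i
    have : Measurable fun p : ℝ × ℝ => (MeasurableEquiv.finTwoArrow.symm p : Fin 2 → ℝ) :=
      MeasurableEquiv.finTwoArrow.symm.measurable
    simp_rw [← hsymm]
    exact (hgm i).comp this
  set G0 : ℝ → ℝ≥0∞ := fun s => ∫⁻ t, g 0 ![t, s] with hG0_def
  set G1 : ℝ → ℝ≥0∞ := fun s => ∫⁻ t, g 1 ![s, t] with hG1_def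
  have hG0m : Measurable G0 := (hFm 0).lintegral_prod_left'
  have hG1m : Measurable G1 := (hFm 1).lintegral_prod_right'
  have hG0int : (∫⁻ s, G0 s) = ∫⁻ y, g 0 y := by
    rw [hG0_def]
    have := lintegral_prod_symm (μ := (volume : Measure ℝ)) (ν := (volume : Measure ℝ))
      (fun p : ℝ × ℝ => g 0 ![p.1, p.2]) (hFm 0).aemeasurable
    simp only at this
    rw [← this]
    have h2 := (MeasurePreserving.symm MeasurableEquiv.finTwoArrow mp).lintegral_comp_emb
      (MeasurableEquiv.finTwoArrow.symm.measurableEmbedding) (g 0)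
    simp_rw [hsymm] at h2
    exact h2
  have hG1int : (∫⁻ s, G1 s) = ∫⁻ y, g 1 y := by
    rw [hG1_def]
    have := lintegral_prod (μ := (volume : Measure ℝ)) (ν := (volume : Measure ℝ))
      (fun p : ℝ × ℝ => g 1 ![p.1, p.2]) (hFm 1).aemeasurable
    simp only at this
    rw [← this]
    have h2 := (MeasurePreserving.symm MeasurableEquiv.finTwoArrow mp).lintegral_comp_emb
      (MeasurableEquiv.finTwoArrow.symm.measurableEmbedding) (g 1)
    simp_rw [hsymm] at h2
    exact h2
  -- main integral estimate on the pi side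
  have step1 : (∫⁻ x, (‖v x‖₊ : ℝ≥0∞) ^ (4:ℝ)) ≤ (∫⁻ y, g 0 y) * ∫⁻ y, g 1 y := by
    have hvg4 : ∀ x, (‖v x‖₊ : ℝ≥0∞) ^ (4:ℝ) = (‖w x‖₊ : ℝ≥0∞) * (‖w x‖₊ : ℝ≥0∞) := by
      intro x
      rw [show ((4:ℝ)) = ((4:ℕ):ℝ) by norm_num, ENNReal.rpow_natCast]
      simp only [hw_def, nnnorm_mul]
      push_cast
      ring
    calc (∫⁻ x, (‖v x‖₊ : ℝ≥0∞) ^ (4:ℝ))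
        ≤ ∫⁻ x, (∫⁻ t, g 0 (Function.update x 0 t)) * ∫⁻ t, g 1 (Function.update x 1 t) := by
          refine lintegral_mono fun x => ?_
          rw [hvg4 x]
          exact mul_le_mul' (key 0 x) (key 1 x)
      _ = ∫⁻ x : Fin 2 → ℝ, G0 (x 1) * G1 (x 0) := by
          refine lintegral_congr fun x => ?_
          simp_rw [hupd0 x, hupd1 x]
          rfl
      _ = ∫⁻ p : ℝ × ℝ, G0 p.2 * G1 p.1 ∂((volume : Measure ℝ).prod volume) := by
          rw [← mp.lintegral_comp_emb MeasurableEquiv.finTwoArrow.measurableEmbedding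
            (fun p => G0 p.2 * G1 p.1)]
          simp_rw [happ]
      _ = ∫⁻ p : ℝ × ℝ, G1 p.1 * G0 p.2 ∂((volume : Measure ℝ).prod volume) :=
          lintegral_congr fun p => mul_comm _ _
      _ = (∫⁻ s, G1 s) * ∫⁻ s, G0 s :=
          lintegral_prod_mul hG1m.aemeasurable hG0m.aemeasurable
      _ = (∫⁻ y, g 0 y) * ∫⁻ y, g 1 y := by rw [hG0int, hG1int, mul_comm]
  -- B 0 + B 1 ≤ D
  have hfv : ∀ y, fderiv ℝ v y =
      (fderiv ℝ u (eL y)).comp (eL : (Fin 2 → ℝ) →L[ℝ] EuclideanSpace ℝ (Fin 2)) := by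
    intro y
    have : fderiv ℝ (u ∘ eL) y = (fderiv ℝ u (eL y)).comp (fderiv ℝ eL y) :=
      fderiv_comp y (hu.differentiable (by simp)).differentiableAt eL.differentiableAt
    rw [hv_def]
    simpa [eL.fderiv, Function.comp_def] using this
  have hsingle : ∀ i : Fin 2, eL (Pi.single i (1:ℝ)) = EuclideanSpace.single i (1:ℝ) := by
    intro i; rfl
  have hBD : B 0 + B 1 ≤ D := by
    have h1 : Measurable fun y => d 0 y ^ (2:ℝ) := (hdm 0).pow_const _
    calc B 0 + B 1 = ∫⁻ y, (d 0 y ^ (2:ℝ) + d 1 y ^ (2:ℝ)) := by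
          rw [hB_def]
          exact (lintegral_add_left h1 _).symm
      _ ≤ D := by
          refine lintegral_mono fun y => ?_
          have hd0 : d 0 y = (‖(fderiv ℝ u (eL y)) (EuclideanSpace.single 0 1)‖₊ : ℝ≥0∞) := by
            simp only [hd_def, hfv y, ContinuousLinearMap.comp_apply,
              ContinuousLinearEquiv.coe_coe, hsingle 0]
          have hd1 : d 1 y = (‖(fderiv ℝ u (eL y)) (EuclideanSpace.single 1 1)‖₊ : ℝ≥0∞) := by
            simp only [hd_def, hfv y, ContinuousLinearMap.comp_apply,
              ContinuousLinearEquiv.coe_coe, hsingle 1]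
          rw [hd0, hd1]
          exact sum_sq_apply_le_ennreal (fderiv ℝ u (eL y))
  -- combine
  have hAA : A ^ ((1:ℝ)/2) * A ^ ((1:ℝ)/2) = A := by
    rw [← ENNReal.rpow_add_of_nonneg _ _ (by norm_num) (by norm_num)]
    norm_num
  have main_pi : (∫⁻ x, (‖v x‖₊ : ℝ≥0∞) ^ (4:ℝ)) ≤ 2 * (A * D) := by
    calc (∫⁻ x, (‖v x‖₊ : ℝ≥0∞) ^ (4:ℝ))
        ≤ (∫⁻ y, g 0 y) * ∫⁻ y, g 1 y := step1
      _ ≤ (2 * (A ^ ((1:ℝ)/2) * B 0 ^ ((1:ℝ)/2))) * (2 * (A ^ ((1:ℝ)/2) * B 1 ^ ((1:ℝ)/2))) :=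
          mul_le_mul' (holder 0) (holder 1)
      _ = (2 * (A ^ ((1:ℝ)/2) * A ^ ((1:ℝ)/2))) *
            (2 * (B 0 ^ ((1:ℝ)/2) * B 1 ^ ((1:ℝ)/2))) := by ring
      _ = (2 * A) * (2 * (B 0 ^ ((1:ℝ)/2) * B 1 ^ ((1:ℝ)/2))) := by rw [hAA]
      _ ≤ (2 * A) * (B 0 + B 1) :=
          mul_le_mul_right (two_mul_geom_mean_le_add_ennreal _ _) _
      _ ≤ (2 * A) * D := mul_le_mul_right hBD _
      _ = 2 * (A * D) := by ring
  -- transport to the Euclidean side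
  have transport : ∀ h : EuclideanSpace ℝ (Fin 2) → ℝ≥0∞,
      (∫⁻ y, h (eL y)) = ∫⁻ x, h x := by
    intro h
    have h2 := (MeasurePreserving.symm ((MeasurableEquiv.toLp 2 (Fin 2 → ℝ)).symm)
        (EuclideanSpace.volume_preserving_symm_measurableEquiv_toLp (Fin 2))).lintegral_comp_emb
      (((MeasurableEquiv.toLp 2 (Fin 2 → ℝ)).symm).symm.measurableEmbedding) h
    have hco : ∀ y : Fin 2 → ℝ, (((MeasurableEquiv.toLp 2 (Fin 2 → ℝ)).symm).symm y) = eL y := by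
      intro y; rfl
    simp_rw [hco] at h2
    exact h2
  have main_E : (∫⁻ x, (‖u x‖₊ : ℝ≥0∞) ^ (4:ℝ)) ≤
      2 * ((∫⁻ x, (‖u x‖₊ : ℝ≥0∞) ^ (2:ℝ)) * ∫⁻ x, (‖fderiv ℝ u x‖₊ : ℝ≥0∞) ^ (2:ℝ)) := by
    have t4 := transport fun x => (‖u x‖₊ : ℝ≥0∞) ^ (4:ℝ)
    have t2 := transport fun x => (‖u x‖₊ : ℝ≥0∞) ^ (2:ℝ)
    have tD := transport fun x => (‖fderiv ℝ u x‖₊ : ℝ≥0∞) ^ (2:ℝ)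
    rw [← t4, ← t2, ← tD]
    exact main_pi
  -- conclude
  have e4 : eLpNorm u 4 volume = (∫⁻ x, (‖u x‖₊ : ℝ≥0∞) ^ (4:ℝ)) ^ ((1:ℝ)/4) := by
    rw [eLpNorm_eq_lintegral_rpow_enorm_toReal (by norm_num) (by norm_num)]
    simp only [ENNReal.toReal_ofNat, enorm_eq_nnnorm]
  have e2 : eLpNorm u 2 volume = (∫⁻ x, (‖u x‖₊ : ℝ≥0∞) ^ (2:ℝ)) ^ ((1:ℝ)/2) := by
    rw [eLpNorm_eq_lintegral_rpow_enorm_toReal (by norm_num) (by norm_num)]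
    simp only [ENNReal.toReal_ofNat, enorm_eq_nnnorm]
  have eD : eLpNorm (fun x => ‖fderiv ℝ u x‖) 2 volume
      = (∫⁻ x, (‖fderiv ℝ u x‖₊ : ℝ≥0∞) ^ (2:ℝ)) ^ ((1:ℝ)/2) := by
    rw [eLpNorm_eq_lintegral_rpow_enorm_toReal (by norm_num) (by norm_num)]
    simp only [ENNReal.toReal_ofNat, enorm_eq_nnnorm, nnnorm_norm]
  rw [e4, e2, eD, ← ENNReal.rpow_mul, ← ENNReal.rpow_mul,
    show ((1:ℝ)/2 * ((1:ℝ)/2)) = (1:ℝ)/4 by norm_num]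
  calc (∫⁻ x, (‖u x‖₊ : ℝ≥0∞) ^ (4:ℝ)) ^ ((1:ℝ)/4)
      ≤ (2 * ((∫⁻ x, (‖u x‖₊ : ℝ≥0∞) ^ (2:ℝ)) * ∫⁻ x, (‖fderiv ℝ u x‖₊ : ℝ≥0∞) ^ (2:ℝ)))
          ^ ((1:ℝ)/4) := ENNReal.rpow_le_rpow main_E (by norm_num)
    _ = (2:ℝ≥0∞) ^ ((1:ℝ)/4) * (∫⁻ x, (‖u x‖₊ : ℝ≥0∞) ^ (2:ℝ)) ^ ((1:ℝ)/4) *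
          (∫⁻ x, (‖fderiv ℝ u x‖₊ : ℝ≥0∞) ^ (2:ℝ)) ^ ((1:ℝ)/4) := by
        rw [ENNReal.mul_rpow_of_nonneg _ _ (by norm_num : (0:ℝ) ≤ 1/4),
          ENNReal.mul_rpow_of_nonneg _ _ (by norm_num : (0:ℝ) ≤ 1/4), mul_assoc]
end

section
/- Let u : ℝ³ → ℝ be a smooth function with compact support. Then ‖u‖_{L⁴} ≤ 4^{1/4} ‖u‖_{L²}^{1/4} ‖∇u‖_{L²}^{3/4} (Ladyzhenskaya's inequality in dimension 3, with the explicit constant C = 4). -/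
open MeasureTheory ENNReal NNReal

lemma cs_lintegral {α : Type*} [MeasurableSpace α] (μ : Measure α) {f g : α → ℝ≥0∞}
    (hf : AEMeasurable f μ) (hg : AEMeasurable g μ) :
    ∫⁻ a, f a * g a ∂μ ≤ (∫⁻ a, f a ^ 2 ∂μ) ^ (1/2 : ℝ) * (∫⁻ a, g a ^ 2 ∂μ) ^ (1/2 : ℝ) := by
  have hpq : Real.HolderConjugate 2 2 := Real.HolderConjugate.two_two
  have h := ENNReal.lintegral_mul_le_Lp_mul_Lq μ hpq hf hg
  have e2 : ∀ x : ℝ≥0∞, x ^ (2:ℝ) = x ^ (2:ℕ) := fun x => by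
    rw [← ENNReal.rpow_natCast]; norm_num
  simp only [Pi.mul_apply, e2] at h
  exact h

lemma key1d {v : ℝ → ℝ} (hv : ContDiff ℝ 1 v) (hcs : HasCompactSupport v) (b : ℝ) :
    ((‖v b‖₊ : ℝ≥0∞)) ^ 2 ≤ 2 * ∫⁻ t, (‖v t‖₊ : ℝ≥0∞) * ‖deriv v t‖₊ := by
  set w : ℝ → ℝ := fun t => v t * v t with hw
  have hwc : ContDiff ℝ 1 w := hv.mul hv
  have hwcs : HasCompactSupport w := hcs.mul_left
  have h := HasCompactSupport.enorm_le_lintegral_Ici_deriv hwc hwcs b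
  have hderiv : ∀ t, deriv w t = deriv v t * v t + v t * deriv v t := by
    intro t
    exact deriv_mul (hv.differentiable (by norm_num) t) (hv.differentiable (by norm_num) t)
  calc ((‖v b‖₊ : ℝ≥0∞)) ^ 2 = (‖w b‖₊ : ℝ≥0∞) := by
        simp [hw, nnnorm_mul, sq, ENNReal.coe_mul]
    _ ≤ ∫⁻ t in Set.Iic b, ‖deriv w t‖₊ := h
    _ ≤ ∫⁻ t, (‖deriv w t‖₊ : ℝ≥0∞) := setLIntegral_le_lintegral _ _
    _ ≤ ∫⁻ t, 2 * ((‖v t‖₊ : ℝ≥0∞) * ‖deriv v t‖₊) := by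
        refine lintegral_mono fun t => ?_
        rw [hderiv t]
        calc (‖deriv v t * v t + v t * deriv v t‖₊ : ℝ≥0∞)
            ≤ (‖deriv v t * v t‖₊ : ℝ≥0∞) + ‖v t * deriv v t‖₊ := by
              exact_mod_cast nnnorm_add_le _ _
          _ = 2 * ((‖v t‖₊ : ℝ≥0∞) * ‖deriv v t‖₊) := by
              simp only [nnnorm_mul, ENNReal.coe_mul]
              ring

    _ = 2 * ∫⁻ t, (‖v t‖₊ : ℝ≥0∞) * ‖deriv v t‖₊ := lintegral_const_mul 2 (hv.continuous.measurable.enorm.mul ((hv.continuous_deriv le_rfl).measurable.enorm))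

section MainCalc

lemma sq_rpow_half (x : ℝ≥0∞) : (x ^ (1/2:ℝ)) ^ 2 = x := by
  rw [← ENNReal.rpow_natCast (x ^ (1/2:ℝ)) 2, ← ENNReal.rpow_mul]
  norm_num

lemma rpow_half_mul_self (x : ℝ≥0∞) : x ^ (1/2:ℝ) * x ^ (1/2:ℝ) = x := by
  rw [← ENNReal.rpow_add_of_nonneg _ _ (by norm_num) (by norm_num)]
  norm_num

lemma main_calc {G D0 D1 D2 : ℝ × ℝ × ℝ → ℝ≥0∞}
    (hG : Measurable G) (hD0 : Measurable D0) (hD1 : Measurable D1) (hD2 : Measurable D2)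
    (h0 : ∀ z x y, G (z,x,y) ^ 2 ≤ 2 * ∫⁻ t, G (t,x,y) * D0 (t,x,y))
    (h1 : ∀ z x y, G (z,x,y) ^ 2 ≤ 2 * ∫⁻ t, G (z,t,y) * D1 (z,t,y))
    (h2 : ∀ z x y, G (z,x,y) ^ 2 ≤ 2 * ∫⁻ t, G (z,x,t) * D2 (z,x,t)) :
    ∫⁻ p, G p ^ 4 ≤ 8 * (∫⁻ p, G p ^ 2) ^ (1/2:ℝ) * (∫⁻ p, D0 p ^ 2) ^ (1/2:ℝ)
      * ((∫⁻ p, D1 p ^ 2) ^ (1/2:ℝ) * (∫⁻ p, D2 p ^ 2) ^ (1/2:ℝ)) := by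
  -- notation
  set M0 : ℝ≥0∞ := ∫⁻ p, G p * D0 p with hM0
  set T1 : ℝ → ℝ → ℝ≥0∞ := fun z y => ∫⁻ t, G (z,t,y) * D1 (z,t,y) with hT1
  set T2 : ℝ → ℝ → ℝ≥0∞ := fun z x => ∫⁻ t, G (z,x,t) * D2 (z,x,t) with hT2
  set S : ℝ → ℝ≥0∞ := fun z => ∫⁻ w : ℝ × ℝ, G (z,w) ^ 2 with hS
  set Q1 : ℝ → ℝ≥0∞ := fun z => ∫⁻ w : ℝ × ℝ, D1 (z,w) ^ 2 with hQ1
  set Q2 : ℝ → ℝ≥0∞ := fun z => ∫⁻ w : ℝ × ℝ, D2 (z,w) ^ 2 with hQ2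
  -- basic measurability of slices
  have fub : ∀ (F : ℝ × ℝ × ℝ → ℝ≥0∞), Measurable F →
      ∫⁻ p, F p = ∫⁻ z, ∫⁻ w : ℝ × ℝ, F (z, w) := by
    intro F hF
    rw [Measure.volume_eq_prod]
    exact lintegral_prod _ hF.aemeasurable
  have slice : ∀ (F : ℝ × ℝ × ℝ → ℝ≥0∞), Measurable F → ∀ z : ℝ,
      Measurable fun w : ℝ × ℝ => F (z, w) :=
    fun F hF z => hF.comp measurable_prodMk_left
  -- step (3): ∫⁻ y, T1 z y = ∬ (G*D1)(z,·)
  have hswap1 : ∀ z, ∫⁻ y, T1 z y = ∫⁻ w : ℝ × ℝ, G (z,w) * D1 (z,w) := by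
    intro z
    have hm : Measurable fun w : ℝ × ℝ => G (z,w) * D1 (z,w) :=
      ((slice G hG z).mul (slice D1 hD1 z))
    rw [hT1]
    rw [Measure.volume_eq_prod, lintegral_prod _ hm.aemeasurable]
    exact (lintegral_lintegral_swap hm.aemeasurable).symm
  have hswap2 : ∀ z, ∫⁻ x, T2 z x = ∫⁻ w : ℝ × ℝ, G (z,w) * D2 (z,w) := by
    intro z
    have hm : Measurable fun w : ℝ × ℝ => G (z,w) * D2 (z,w) :=
      ((slice G hG z).mul (slice D2 hD2 z))
    rw [hT2, Measure.volume_eq_prod, lintegral_prod _ hm.aemeasurable]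
  -- step (4): S z ≤ 2 * M0
  have hS_le : ∀ z, S z ≤ 2 * M0 := by
    intro z
    have hm : Measurable fun q : ℝ × (ℝ × ℝ) => G q * D0 q := hG.mul hD0
    calc S z ≤ ∫⁻ w : ℝ × ℝ, 2 * ∫⁻ t, G (t, w) * D0 (t, w) := by
          refine lintegral_mono fun w => ?_
          exact h0 z w.1 w.2
      _ = 2 * ∫⁻ w : ℝ × ℝ, ∫⁻ t, G (t, w) * D0 (t, w) := by
          refine lintegral_const_mul 2 ?_
          exact Measurable.lintegral_prod_left (f := fun t (w : ℝ × ℝ) => G (t,w) * D0 (t,w)) hm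
      _ = 2 * ∫⁻ t, ∫⁻ w : ℝ × ℝ, G (t, w) * D0 (t, w) := by
          rw [lintegral_lintegral_swap (f := fun t (w : ℝ × ℝ) => G (t,w) * D0 (t,w))
            hm.aemeasurable]
      _ = 2 * M0 := by
          rw [hM0, fub _ hm]
  -- Cauchy–Schwarz on the plane: P_i ≤ S^{1/2} Q_i^{1/2}
  have hP1 : ∀ z, (∫⁻ w : ℝ × ℝ, G (z,w) * D1 (z,w)) ≤ S z ^ (1/2:ℝ) * Q1 z ^ (1/2:ℝ) :=
    fun z => cs_lintegral volume (slice G hG z).aemeasurable (slice D1 hD1 z).aemeasurable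
  have hP2 : ∀ z, (∫⁻ w : ℝ × ℝ, G (z,w) * D2 (z,w)) ≤ S z ^ (1/2:ℝ) * Q2 z ^ (1/2:ℝ) :=
    fun z => cs_lintegral volume (slice G hG z).aemeasurable (slice D2 hD2 z).aemeasurable
  -- step (2): inner 2D bound
  have hinner : ∀ z, (∫⁻ w : ℝ × ℝ, G (z,w) ^ 4) ≤
      4 * ((∫⁻ x, T2 z x) * (∫⁻ y, T1 z y)) := by
    intro z
    have hmT1 : Measurable (T1 z) := by
      refine Measurable.lintegral_prod_left (f := fun t y => G (z,t,y) * D1 (z,t,y)) ?_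
      exact slice _ (hG.mul hD1) z
    have hmT2 : Measurable (T2 z) := by
      refine Measurable.lintegral_prod_right (f := fun x t => G (z,x,t) * D2 (z,x,t)) ?_
      exact (slice _ (hG.mul hD2) z)
    calc (∫⁻ w : ℝ × ℝ, G (z,w) ^ 4)
        ≤ ∫⁻ w : ℝ × ℝ, (2 * T2 z w.1) * (2 * T1 z w.2) := by
          refine lintegral_mono fun w => ?_
          have : G (z,w) ^ 4 = G (z,w) ^ 2 * G (z,w) ^ 2 := by ring
          rw [this]
          exact mul_le_mul' (h2 z w.1 w.2) (h1 z w.1 w.2)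
      _ = (∫⁻ x, 2 * T2 z x) * (∫⁻ y, 2 * T1 z y) := by
          rw [Measure.volume_eq_prod]
          exact lintegral_prod_mul ((measurable_const.mul hmT2)).aemeasurable
            ((measurable_const.mul hmT1)).aemeasurable
      _ = 4 * ((∫⁻ x, T2 z x) * (∫⁻ y, T1 z y)) := by
          rw [lintegral_const_mul 2 hmT2, lintegral_const_mul 2 hmT1]
          ring
  -- measurability of S, Q1, Q2
  have hmS : Measurable S :=
    Measurable.lintegral_prod_right (f := fun z (w : ℝ × ℝ) => G (z,w) ^ 2) (hG.pow_const 2)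
  have hmQ1 : Measurable Q1 :=
    Measurable.lintegral_prod_right (f := fun z (w : ℝ × ℝ) => D1 (z,w) ^ 2) (hD1.pow_const 2)
  have hmQ2 : Measurable Q2 :=
    Measurable.lintegral_prod_right (f := fun z (w : ℝ × ℝ) => D2 (z,w) ^ 2) (hD2.pow_const 2)
  -- chain
  have key : ∫⁻ p, G p ^ 4 ≤ 8 * M0 * ∫⁻ z, Q1 z ^ (1/2:ℝ) * Q2 z ^ (1/2:ℝ) := by
    calc ∫⁻ p, G p ^ 4 = ∫⁻ z, ∫⁻ w : ℝ × ℝ, G (z,w) ^ 4 := by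
          rw [Measure.volume_eq_prod, lintegral_prod _ ((hG.pow_const 4)).aemeasurable]
      _ ≤ ∫⁻ z, 8 * M0 * (Q1 z ^ (1/2:ℝ) * Q2 z ^ (1/2:ℝ)) := by
          refine lintegral_mono fun z => ?_
          calc (∫⁻ w : ℝ × ℝ, G (z,w) ^ 4)
              ≤ 4 * ((∫⁻ x, T2 z x) * (∫⁻ y, T1 z y)) := hinner z
            _ ≤ 4 * ((S z ^ (1/2:ℝ) * Q2 z ^ (1/2:ℝ)) * (S z ^ (1/2:ℝ) * Q1 z ^ (1/2:ℝ))) := by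
                gcongr
                · rw [hswap2 z]; exact hP2 z
                · rw [hswap1 z]; exact hP1 z
            _ = 4 * S z * (Q1 z ^ (1/2:ℝ) * Q2 z ^ (1/2:ℝ)) := by
                rw [show (S z ^ (1/2:ℝ) * Q2 z ^ (1/2:ℝ)) * (S z ^ (1/2:ℝ) * Q1 z ^ (1/2:ℝ))
                    = (S z ^ (1/2:ℝ) * S z ^ (1/2:ℝ)) * (Q1 z ^ (1/2:ℝ) * Q2 z ^ (1/2:ℝ)) by ring,
                  rpow_half_mul_self]
                ring
            _ ≤ 4 * (2 * M0) * (Q1 z ^ (1/2:ℝ) * Q2 z ^ (1/2:ℝ)) := by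
                gcongr
                exact hS_le z
            _ = 8 * M0 * (Q1 z ^ (1/2:ℝ) * Q2 z ^ (1/2:ℝ)) := by ring
      _ = 8 * M0 * ∫⁻ z, Q1 z ^ (1/2:ℝ) * Q2 z ^ (1/2:ℝ) := by
          exact lintegral_const_mul _ ((hmQ1.pow_const _).mul (hmQ2.pow_const _))
  -- Cauchy–Schwarz in z and for M0
  have hz : (∫⁻ z, Q1 z ^ (1/2:ℝ) * Q2 z ^ (1/2:ℝ))
      ≤ (∫⁻ p, D1 p ^ 2) ^ (1/2:ℝ) * (∫⁻ p, D2 p ^ 2) ^ (1/2:ℝ) := by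
    have h := cs_lintegral (volume : Measure ℝ)
      (f := fun z => Q1 z ^ (1/2:ℝ)) (g := fun z => Q2 z ^ (1/2:ℝ))
      (hmQ1.pow_const _).aemeasurable (hmQ2.pow_const _).aemeasurable
    simp only [sq_rpow_half] at h
    have e1 : ∫⁻ z, Q1 z = ∫⁻ p, D1 p ^ 2 := by
      rw [Measure.volume_eq_prod (α := ℝ) (β := ℝ × ℝ), lintegral_prod _ ((hD1.pow_const 2)).aemeasurable]
    have e2 : ∫⁻ z, Q2 z = ∫⁻ p, D2 p ^ 2 := by
      rw [Measure.volume_eq_prod (α := ℝ) (β := ℝ × ℝ), lintegral_prod _ ((hD2.pow_const 2)).aemeasurable]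
    rwa [e1, e2] at h
  have hM : M0 ≤ (∫⁻ p, G p ^ 2) ^ (1/2:ℝ) * (∫⁻ p, D0 p ^ 2) ^ (1/2:ℝ) :=
    cs_lintegral volume hG.aemeasurable hD0.aemeasurable
  calc ∫⁻ p, G p ^ 4 ≤ 8 * M0 * ∫⁻ z, Q1 z ^ (1/2:ℝ) * Q2 z ^ (1/2:ℝ) := key
    _ ≤ 8 * ((∫⁻ p, G p ^ 2) ^ (1/2:ℝ) * (∫⁻ p, D0 p ^ 2) ^ (1/2:ℝ))
        * ((∫⁻ p, D1 p ^ 2) ^ (1/2:ℝ) * (∫⁻ p, D2 p ^ 2) ^ (1/2:ℝ)) := by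
        gcongr
    _ = 8 * (∫⁻ p, G p ^ 2) ^ (1/2:ℝ) * (∫⁻ p, D0 p ^ 2) ^ (1/2:ℝ)
        * ((∫⁻ p, D1 p ^ 2) ^ (1/2:ℝ) * (∫⁻ p, D2 p ^ 2) ^ (1/2:ℝ)) := by ring

end MainCalc

noncomputable section

abbrev E3 : Type := EuclideanSpace ℝ (Fin 3)

def eta : E3 ≃ᵐ ℝ × ℝ × ℝ :=
  (MeasurableEquiv.toLp 2 (Fin 3 → ℝ)).symm.trans <|
    (MeasurableEquiv.piFinSuccAbove (fun _ : Fin 3 => ℝ) 0).trans <|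
      (MeasurableEquiv.refl ℝ).prodCongr <|
        (MeasurableEquiv.piFinSuccAbove (fun _ : Fin 2 => ℝ) 0).trans <|
          (MeasurableEquiv.refl ℝ).prodCongr (MeasurableEquiv.funUnique (Fin 1) ℝ)

lemma eta_mp : MeasurePreserving (eta : E3 → ℝ × ℝ × ℝ) volume volume := by
  have h1 := EuclideanSpace.volume_preserving_symm_measurableEquiv_toLp (Fin 3)
  have h2 := volume_preserving_piFinSuccAbove (fun _ : Fin 3 => ℝ) 0
  have h3 := volume_preserving_piFinSuccAbove (fun _ : Fin 2 => ℝ) 0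
  have h4 := volume_preserving_funUnique (Fin 1) ℝ
  have mpA : MeasurePreserving
      (Prod.map (id : ℝ → ℝ) (⇑(MeasurableEquiv.funUnique (Fin 1) ℝ))) volume volume :=
    (MeasurePreserving.id _).prod h4
  have mpB := mpA.comp h3
  have mpC : MeasurePreserving (Prod.map (id : ℝ → ℝ)
      ((Prod.map (id : ℝ → ℝ) (⇑(MeasurableEquiv.funUnique (Fin 1) ℝ))) ∘
        ⇑(MeasurableEquiv.piFinSuccAbove (fun _ : Fin 2 => ℝ) 0))) volume volume :=
    (MeasurePreserving.id _).prod mpB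
  have final := (mpC.comp h2).comp h1
  have heq : ⇑(eta : E3 ≃ᵐ ℝ × ℝ × ℝ) = (Prod.map (id : ℝ → ℝ)
      ((Prod.map (id : ℝ → ℝ) (⇑(MeasurableEquiv.funUnique (Fin 1) ℝ))) ∘
        ⇑(MeasurableEquiv.piFinSuccAbove (fun _ : Fin 2 => ℝ) 0))) ∘
      (⇑(MeasurableEquiv.piFinSuccAbove (fun _ : Fin 3 => ℝ) 0)) ∘
      ⇑(MeasurableEquiv.toLp 2 (Fin 3 → ℝ)).symm := rfl
  rw [heq]
  exact final

lemma eta_apply (w : E3) : eta w = (w 0, w 1, w 2) := by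
  show ((w 0, w 1, w 2) : ℝ × ℝ × ℝ) = _
  rfl

end

noncomputable section
open EuclideanSpace

abbrev ee (i : Fin 3) : E3 := EuclideanSpace.single i (1:ℝ)

lemma eta_symm_eq (z x y : ℝ) :
    (eta.symm (z, x, y) : E3) = z • ee 0 + x • ee 1 + y • ee 2 := by
  have h : eta (z • ee 0 + x • ee 1 + y • ee 2) = (z, x, y) := by
    rw [eta_apply]
    simp [ee, PiLp.add_apply, PiLp.smul_apply, EuclideanSpace.single_apply]
  calc eta.symm (z, x, y) = eta.symm (eta (z • ee 0 + x • ee 1 + y • ee 2)) := by rw [h]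
    _ = _ := eta.symm_apply_apply _

lemma hasDerivAt_line (u : E3 → ℝ) (hu : ContDiff ℝ (⊤ : ℕ∞) u) (c e : E3) (t : ℝ) :
    HasDerivAt (fun s : ℝ => u (c + s • e)) (fderiv ℝ u (c + t • e) e) t := by
  have l : HasDerivAt (fun s : ℝ => c + s • e) e t := by
    simpa using ((hasDerivAt_id t).smul_const e).const_add c
  exact ((hu.differentiable (by simp) _).hasFDerivAt).comp_hasDerivAt t l

lemma line_isometry (c e : E3) (he : ‖e‖ = 1) :
    Isometry (fun s : ℝ => c + s • e) := by
  refine Isometry.of_dist_eq ?_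
  intro s t
  simp only [dist_eq_norm]
  have : c + s • e - (c + t • e) = (s - t) • e := by module
  rw [this, norm_smul, he, mul_one, Real.norm_eq_abs]

lemma slice_bound (u : E3 → ℝ) (hu : ContDiff ℝ (⊤ : ℕ∞) u) (hsupp : HasCompactSupport u)
    (c e : E3) (he : ‖e‖ = 1) (z : ℝ) :
    ((‖u (c + z • e)‖₊ : ℝ≥0∞)) ^ 2 ≤
      2 * ∫⁻ t : ℝ, (‖u (c + t • e)‖₊ : ℝ≥0∞) * ‖fderiv ℝ u (c + t • e) e‖₊ := by
  set v : ℝ → ℝ := fun s => u (c + s • e) with hv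
  have hline : ContDiff ℝ 1 (fun s : ℝ => c + s • e) := by
    have h1 : ContDiff ℝ 1 (fun s : ℝ => s • e) := by
      exact ContDiff.smul contDiff_id contDiff_const
    exact contDiff_const.add h1
  have hvc : ContDiff ℝ 1 v := (hu.of_le (by simp)).comp hline
  have hvcs : HasCompactSupport v :=
    hsupp.comp_isClosedEmbedding (line_isometry c e he).isClosedEmbedding
  have hd : ∀ t, deriv v t = fderiv ℝ u (c + t • e) e :=
    fun t => (hasDerivAt_line u hu c e t).deriv
  have h := key1d hvc hvcs z
  simp only [hd] at h
  exact h

end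

lemma ennreal_two_mul_le (a b : ℝ≥0∞) : 2 * (a * b) ≤ a ^ 2 + b ^ 2 := by
  rcases eq_or_ne a ⊤ with ha | ha
  · rcases eq_or_ne b 0 with hb | hb
    · simp [hb]
    · have : a ^ 2 + b ^ 2 = ⊤ := by simp [ha, pow_eq_top_iff]
      rw [this]; exact le_top
  rcases eq_or_ne b ⊤ with hb | hb
  · rcases eq_or_ne a 0 with ha0 | ha0
    · simp [ha0]
    · have : a ^ 2 + b ^ 2 = ⊤ := by simp [hb, pow_eq_top_iff]
      rw [this]; exact le_top
  lift a to ℝ≥0 using ha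
  lift b to ℝ≥0 using hb
  rw [show ((2 : ℝ≥0∞) = ((2 : ℝ≥0) : ℝ≥0∞)) by norm_cast]
  rw [← ENNReal.coe_mul, ← ENNReal.coe_mul, ← ENNReal.coe_pow, ← ENNReal.coe_pow,
    ← ENNReal.coe_add, ENNReal.coe_le_coe, ← NNReal.coe_le_coe]
  push_cast
  nlinarith [sq_nonneg ((a : ℝ) - b)]

lemma two_mul_sqrt_le (X Y : ℝ≥0∞) : 2 * (X ^ (1/2:ℝ) * Y ^ (1/2:ℝ)) ≤ X + Y := by
  have h := ennreal_two_mul_le (X ^ (1/2:ℝ)) (Y ^ (1/2:ℝ))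
  rwa [sq_rpow_half, sq_rpow_half] at h

lemma fderiv_single_sq_le (L : EuclideanSpace ℝ (Fin 3) →L[ℝ] ℝ) :
    ((‖L (ee 1)‖₊ : ℝ≥0∞)) ^ 2 + ((‖L (ee 2)‖₊ : ℝ≥0∞)) ^ 2 ≤ ((‖L‖₊ : ℝ≥0∞)) ^ 2 := by
  have hreal : ‖L (ee 1)‖ ^ 2 + ‖L (ee 2)‖ ^ 2 ≤ ‖L‖ ^ 2 := by
    set a : ℝ := L (ee 1) with hadef
    set b : ℝ := L (ee 2) with hbdef
    set w : E3 := a • ee 1 + b • ee 2 with hwdef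
    have hLw : L w = a ^ 2 + b ^ 2 := by
      rw [hwdef, map_add, L.map_smul, L.map_smul, smul_eq_mul, smul_eq_mul, ← hadef, ← hbdef]
      ring
    have hw : ‖w‖ = Real.sqrt (a ^ 2 + b ^ 2) := by
      rw [EuclideanSpace.norm_eq]
      congr 1
      rw [Fin.sum_univ_three]
      simp [hwdef, ee, PiLp.add_apply, PiLp.smul_apply, EuclideanSpace.single_apply,
        Real.norm_eq_abs, sq_abs]
    have hb2 : a ^ 2 + b ^ 2 ≤ ‖L‖ * Real.sqrt (a ^ 2 + b ^ 2) := by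
      calc a ^ 2 + b ^ 2 = L w := hLw.symm
        _ ≤ ‖L w‖ := le_abs_self _
        _ ≤ ‖L‖ * ‖w‖ := L.le_opNorm w
        _ = ‖L‖ * Real.sqrt (a ^ 2 + b ^ 2) := by rw [hw]
    have hs2 : Real.sqrt (a ^ 2 + b ^ 2) ^ 2 = a ^ 2 + b ^ 2 :=
      Real.sq_sqrt (by positivity)
    have hs0 : 0 ≤ Real.sqrt (a ^ 2 + b ^ 2) := Real.sqrt_nonneg _
    have hN : 0 ≤ ‖L‖ := norm_nonneg _
    have : ‖L (ee 1)‖ ^ 2 + ‖L (ee 2)‖ ^ 2 = a ^ 2 + b ^ 2 := by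
      simp [Real.norm_eq_abs, sq_abs, hadef, hbdef]
    rw [this]
    nlinarith [sq_nonneg (‖L‖ - Real.sqrt (a ^ 2 + b ^ 2))]
  rw [← ENNReal.coe_pow, ← ENNReal.coe_pow, ← ENNReal.coe_pow, ← ENNReal.coe_add,
    ENNReal.coe_le_coe, ← NNReal.coe_le_coe]
  push_cast
  simpa [coe_nnnorm] using hreal

lemma fderiv_single_le (L : EuclideanSpace ℝ (Fin 3) →L[ℝ] ℝ) (i : Fin 3) :
    ((‖L (ee i)‖₊ : ℝ≥0∞)) ≤ (‖L‖₊ : ℝ≥0∞) := by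
  rw [ENNReal.coe_le_coe]
  calc ‖L (ee i)‖₊ ≤ ‖L‖₊ * ‖ee i‖₊ := L.le_opNNNorm _
    _ = ‖L‖₊ := by
        rw [show ‖ee i‖₊ = 1 by simp [ee, EuclideanSpace.nnnorm_single], mul_one]

lemma norm_ee (i : Fin 3) : ‖ee i‖ = 1 := by
  have := EuclideanSpace.nnnorm_single (𝕜 := ℝ) i (1:ℝ)
  simp [ee]


/-- Ladyzhenskaya's inequality in dimension 3 with explicit constant `C = 4`:
for a smooth compactly supported `u : ℝ³ → ℝ`,
`‖u‖_{L⁴} ≤ 4^(1/4) ‖u‖_{L²}^(1/4) ‖∇u‖_{L²}^(3/4)`. -/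
theorem ladyzhenskaya_dim_three (u : EuclideanSpace ℝ (Fin 3) → ℝ)
    (hu : ContDiff ℝ (⊤ : ℕ∞) u) (hsupp : HasCompactSupport u) :
    eLpNorm u 4 volume ≤
      (4 : ℝ≥0∞) ^ ((1 : ℝ) / 4) * eLpNorm u 2 volume ^ ((1 : ℝ) / 4) *
        eLpNorm (fun x => ‖fderiv ℝ u x‖) 2 volume ^ ((3 : ℝ) / 4) := by
  classical
  -- functions on the product space
  set G : ℝ × ℝ × ℝ → ℝ≥0∞ := fun p => (‖u (eta.symm p)‖₊ : ℝ≥0∞) with hGdef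
  set D0 : ℝ × ℝ × ℝ → ℝ≥0∞ := fun p => (‖fderiv ℝ u (eta.symm p) (ee 0)‖₊ : ℝ≥0∞) with hD0def
  set D1 : ℝ × ℝ × ℝ → ℝ≥0∞ := fun p => (‖fderiv ℝ u (eta.symm p) (ee 1)‖₊ : ℝ≥0∞) with hD1def
  set D2 : ℝ × ℝ × ℝ → ℝ≥0∞ := fun p => (‖fderiv ℝ u (eta.symm p) (ee 2)‖₊ : ℝ≥0∞) with hD2def
  have hmΨ : Measurable (⇑eta.symm) := eta.symm.measurable
  have hfd : Continuous (fderiv ℝ u) := hu.continuous_fderiv (by simp)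
  have hdi : ∀ i : Fin 3, Continuous fun w : E3 => fderiv ℝ u w (ee i) :=
    fun i => hfd.clm_apply continuous_const
  have hG : Measurable G := ((hu.continuous.measurable).comp hmΨ).enorm
  have hD0 : Measurable D0 := (((hdi 0).measurable).comp hmΨ).enorm
  have hD1 : Measurable D1 := (((hdi 1).measurable).comp hmΨ).enorm
  have hD2 : Measurable D2 := (((hdi 2).measurable).comp hmΨ).enorm
  -- slice inequalities
  have h0 : ∀ z x y, G (z,x,y) ^ 2 ≤ 2 * ∫⁻ t, G (t,x,y) * D0 (t,x,y) := by
    intro z x y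
    have hc : ∀ t : ℝ, (eta.symm (t,x,y) : E3) = (x • ee 1 + y • ee 2) + t • ee 0 := by
      intro t; rw [eta_symm_eq]; try module
    simp only [hGdef, hD0def, hc]
    exact slice_bound u hu hsupp _ _ (norm_ee 0) z
  have h1 : ∀ z x y, G (z,x,y) ^ 2 ≤ 2 * ∫⁻ t, G (z,t,y) * D1 (z,t,y) := by
    intro z x y
    have hc : ∀ t : ℝ, (eta.symm (z,t,y) : E3) = (z • ee 0 + y • ee 2) + t • ee 1 := by
      intro t; rw [eta_symm_eq]; try module
    simp only [hGdef, hD1def, hc]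
    exact slice_bound u hu hsupp _ _ (norm_ee 1) x
  have h2 : ∀ z x y, G (z,x,y) ^ 2 ≤ 2 * ∫⁻ t, G (z,x,t) * D2 (z,x,t) := by
    intro z x y
    have hc : ∀ t : ℝ, (eta.symm (z,x,t) : E3) = (z • ee 0 + x • ee 1) + t • ee 2 := by
      intro t; rw [eta_symm_eq]; try module
    simp only [hGdef, hD2def, hc]
    exact slice_bound u hu hsupp _ _ (norm_ee 2) y
  have main := main_calc hG hD0 hD1 hD2 h0 h1 h2
  -- transfer to E3
  have mpΨ : MeasurePreserving (⇑eta.symm) volume volume := eta_mp.symm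
  have tr : ∀ (F : E3 → ℝ≥0∞), Measurable F →
      ∫⁻ p, F (eta.symm p) = ∫⁻ w, F w := fun F hF => mpΨ.lintegral_comp hF
  set A : ℝ≥0∞ := ∫⁻ w : E3, (‖u w‖₊ : ℝ≥0∞) ^ 2 with hAdef
  set DD : ℝ≥0∞ := ∫⁻ w : E3, (‖fderiv ℝ u w‖₊ : ℝ≥0∞) ^ 2 with hDDdef
  set I4 : ℝ≥0∞ := ∫⁻ w : E3, (‖u w‖₊ : ℝ≥0∞) ^ 4 with hI4def
  set X0 : ℝ≥0∞ := ∫⁻ w : E3, (‖fderiv ℝ u w (ee 0)‖₊ : ℝ≥0∞) ^ 2 with hX0def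
  set X1 : ℝ≥0∞ := ∫⁻ w : E3, (‖fderiv ℝ u w (ee 1)‖₊ : ℝ≥0∞) ^ 2 with hX1def
  set X2 : ℝ≥0∞ := ∫⁻ w : E3, (‖fderiv ℝ u w (ee 2)‖₊ : ℝ≥0∞) ^ 2 with hX2def
  have trG4 : ∫⁻ p, G p ^ 4 = I4 :=
    tr _ ((hu.continuous.measurable.enorm).pow_const 4)
  have trG2 : ∫⁻ p, G p ^ 2 = A :=
    tr _ ((hu.continuous.measurable.enorm).pow_const 2)
  have trD0 : ∫⁻ p, D0 p ^ 2 = X0 := tr _ (((hdi 0).measurable.enorm).pow_const 2)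
  have trD1 : ∫⁻ p, D1 p ^ 2 = X1 := tr _ (((hdi 1).measurable.enorm).pow_const 2)
  have trD2 : ∫⁻ p, D2 p ^ 2 = X2 := tr _ (((hdi 2).measurable.enorm).pow_const 2)
  rw [trG4, trG2, trD0, trD1, trD2] at main
  -- bound the directional pieces by the full gradient
  have hX0le : X0 ≤ DD := by
    refine lintegral_mono fun w => ?_
    have := fderiv_single_le (fderiv ℝ u w) 0
    gcongr
  have hX12 : X1 + X2 ≤ DD := by
    rw [hX1def, hX2def, ← lintegral_add_left (((hdi 1).measurable.nnnorm.coe_nnreal_ennreal).pow_const 2)]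
    refine lintegral_mono fun w => ?_
    exact fderiv_single_sq_le (fderiv ℝ u w)
  have core : I4 ≤ 4 * A ^ (1/2:ℝ) * DD ^ (3/2:ℝ) := by
    have hDDhalf : DD ^ (1/2:ℝ) * DD = DD ^ (3/2:ℝ) := by
      nth_rewrite 2 [← ENNReal.rpow_one DD]
      rw [← ENNReal.rpow_add_of_nonneg _ _ (by norm_num) (by norm_num)]
      norm_num
    calc I4 ≤ 8 * A ^ (1/2:ℝ) * X0 ^ (1/2:ℝ) * (X1 ^ (1/2:ℝ) * X2 ^ (1/2:ℝ)) := main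
      _ = 4 * A ^ (1/2:ℝ) * X0 ^ (1/2:ℝ) * (2 * (X1 ^ (1/2:ℝ) * X2 ^ (1/2:ℝ))) := by ring
      _ ≤ 4 * A ^ (1/2:ℝ) * DD ^ (1/2:ℝ) * DD :=
          mul_le_mul' (mul_le_mul' le_rfl (ENNReal.rpow_le_rpow hX0le (by norm_num)))
            ((two_mul_sqrt_le X1 X2).trans hX12)
      _ = 4 * A ^ (1/2:ℝ) * DD ^ (3/2:ℝ) := by
          rw [mul_assoc (4 * A ^ (1/2:ℝ)), hDDhalf]
  -- identify the eLpNorms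
  have e2 : ∀ x : ℝ≥0∞, x ^ (2:ℝ) = x ^ (2:ℕ) := fun x => by
    rw [← ENNReal.rpow_natCast]; norm_num
  have e4 : ∀ x : ℝ≥0∞, x ^ (4:ℝ) = x ^ (4:ℕ) := fun x => by
    rw [← ENNReal.rpow_natCast]; norm_num
  have hN4 : eLpNorm u 4 volume = I4 ^ (1/4:ℝ) := by
    rw [eLpNorm_eq_lintegral_rpow_enorm_toReal (by norm_num) (by norm_num)]
    simp only [ENNReal.toReal_ofNat, e4, enorm_eq_nnnorm, hI4def]
  have hN2 : eLpNorm u 2 volume = A ^ (1/2:ℝ) := by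
    rw [eLpNorm_eq_lintegral_rpow_enorm_toReal (by norm_num) (by norm_num)]
    simp only [ENNReal.toReal_ofNat, e2, enorm_eq_nnnorm, hAdef]
  have hNg : eLpNorm (fun x => ‖fderiv ℝ u x‖) 2 volume = DD ^ (1/2:ℝ) := by
    rw [eLpNorm_eq_lintegral_rpow_enorm_toReal (by norm_num) (by norm_num)]
    simp only [ENNReal.toReal_ofNat, e2, enorm_eq_nnnorm, nnnorm_norm, hDDdef]
  rw [hN4, hN2, hNg]
  calc I4 ^ (1/4:ℝ) ≤ (4 * A ^ (1/2:ℝ) * DD ^ (3/2:ℝ)) ^ (1/4:ℝ) :=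
        ENNReal.rpow_le_rpow core (by norm_num)
    _ = (4:ℝ≥0∞) ^ ((1:ℝ)/4) * (A ^ (1/2:ℝ)) ^ ((1:ℝ)/4) * (DD ^ (1/2:ℝ)) ^ ((3:ℝ)/4) := by
        rw [ENNReal.mul_rpow_of_nonneg _ _ (by norm_num),
          ENNReal.mul_rpow_of_nonneg _ _ (by norm_num)]
        congr 1
        rw [← ENNReal.rpow_mul, ← ENNReal.rpow_mul]
        norm_num
end

section
/- For every real r with 2 ≤ r < ∞ there exists a constant C > 0 such that for every smooth compactly supported function u : ℝ² → ℝ one has ‖u‖_{L^r} ≤ C ‖∇u‖_{L²}^{1 - 2/r} ‖u‖_{L²}^{2/r} (the Gagliardo–Nirenberg interpolation inequality in dimension 2 with j = 0, m = 1, p = q = 2, θ = 1 − 2/r). -/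
open MeasureTheory ENNReal NNReal

set_option maxHeartbeats 1000000

variable {α : Type*} [MeasurableSpace α] {μ : Measure α}

lemma gn_eLpNorm_pow_nat (u : α → ℝ) (m : ℕ) (hm : 0 < m) (p : ℝ≥0∞) :
    eLpNorm (fun x => u x ^ m) p μ = eLpNorm u (p * m) μ ^ m := by
  have h1 : eLpNorm (fun x => u x ^ m) p μ = eLpNorm (fun x => ‖u x‖ ^ (m : ℝ)) p μ :=
    eLpNorm_congr_norm_ae (Filter.Eventually.of_forall fun x => by
      rw [Real.rpow_natCast]; simp [Real.norm_eq_abs, abs_pow, abs_abs])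
  rw [h1, eLpNorm_norm_rpow u (by positivity : (0:ℝ) < (m:ℝ)), ENNReal.ofReal_natCast,
    ENNReal.rpow_natCast]

lemma gn_conj : NNReal.HolderConjugate
    (Module.finrank ℝ (EuclideanSpace ℝ (Fin 2))) 2 := by
  rw [finrank_euclideanSpace_fin]
  exact NNReal.holderConjugate_iff.2 ⟨one_lt_two, by push_cast; rw [← two_mul, mul_inv_cancel₀ two_ne_zero]⟩

lemma gn_even : ∀ k : ℕ, 1 ≤ k → ∃ C : ℝ≥0, 0 < C ∧
    ∀ u : EuclideanSpace ℝ (Fin 2) → ℝ, ContDiff ℝ (⊤ : ℕ∞) u → HasCompactSupport u →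
      eLpNorm u (2 * (k : ℝ≥0∞)) volume ^ k ≤
        (C : ℝ≥0∞) * eLpNorm (fderiv ℝ u) 2 volume ^ (k - 1) * eLpNorm u 2 volume := by
  intro k hk
  induction k, hk using Nat.le_induction with
  | base => exact ⟨1, one_pos, fun u hu h2u => by simp⟩
  | succ k hk ih =>
    obtain ⟨C, hC, ih⟩ := ih
    set S := eLpNormLESNormFDerivOneConst (volume : Measure (EuclideanSpace ℝ (Fin 2))) 2 with hS
    set c : ℝ≥0 := ‖((k + 1 : ℕ) : ℝ)‖₊ with hc
    have hcpos : 0 < c := by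
      rw [hc]; exact nnnorm_pos.2 (Nat.cast_ne_zero.2 (Nat.succ_ne_zero _))
    refine ⟨(S + 1) * c * C, by positivity, fun u hu h2u => ?_⟩
    set A := eLpNorm (fderiv ℝ u) 2 volume with hA
    set B := eLpNorm u 2 volume with hB
    set v : EuclideanSpace ℝ (Fin 2) → ℝ := fun x => u x ^ (k + 1) with hv
    have hv1 : ContDiff ℝ 1 v := (hu.pow _).of_le (by simp)
    have hv2 : HasCompactSupport v := by
      have := h2u.comp_left (g := fun t : ℝ => t ^ (k + 1)) (by simp)
      exact this
    have sob := eLpNorm_le_eLpNorm_fderiv_one (μ := volume) hv1 hv2 gn_conj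
    have hcast : (((2 : ℝ≥0)) : ℝ≥0∞) = 2 := by norm_cast
    rw [hcast] at sob
    set φ : EuclideanSpace ℝ (Fin 2) → ℝ := fun x => (((k + 1 : ℕ) : ℝ)) * u x ^ k with hφdef
    have hder : fderiv ℝ v = φ • fderiv ℝ u := by
      funext x
      show _ = φ x • fderiv ℝ u x
      exact ((hasDerivAt_pow (k + 1) (u x)).comp_hasFDerivAt x
        ((hu.differentiable (by simp)) x).hasFDerivAt).fderiv
    have hφmeas : AEStronglyMeasurable φ volume :=
      (continuous_const.mul (hu.continuous.pow _)).aestronglyMeasurable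
    have hfmeas : AEStronglyMeasurable (fderiv ℝ u) volume :=
      (hu.continuous_fderiv (by simp)).aestronglyMeasurable
    have holder :
        eLpNorm (fderiv ℝ v) 1 volume ≤
          eLpNorm φ 2 volume * A := by
      rw [hder]
      exact eLpNorm_smul_le_mul_eLpNorm hfmeas hφmeas
        (hpqr := ⟨by rw [inv_one]; exact ENNReal.inv_two_add_inv_two⟩)
    have hφ : eLpNorm φ 2 volume =
        c * eLpNorm u (2 * ((k : ℕ) : ℝ≥0∞)) volume ^ k := by
      rw [← gn_eLpNorm_pow_nat u k hk 2]
      exact eLpNorm_const_smul (((k + 1 : ℕ) : ℝ)) (fun x => u x ^ k) 2 volume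
    have hlhs : eLpNorm v 2 volume = eLpNorm u (2 * ((k + 1 : ℕ) : ℝ≥0∞)) volume ^ (k + 1) :=
      gn_eLpNorm_pow_nat u (k + 1) (Nat.succ_pos _) 2
    have step : eLpNorm u (2 * ((k + 1 : ℕ) : ℝ≥0∞)) volume ^ (k + 1) ≤
        (S : ℝ≥0∞) * (c * (eLpNorm u (2 * ((k : ℕ) : ℝ≥0∞)) volume ^ k) * A) := by
      rw [← hlhs]
      refine sob.trans (mul_le_mul_right (holder.trans_eq ?_) _)
      rw [hφ]
    calc eLpNorm u (2 * ((k + 1 : ℕ) : ℝ≥0∞)) volume ^ (k + 1)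
        ≤ (S : ℝ≥0∞) * (c * (eLpNorm u (2 * ((k : ℕ) : ℝ≥0∞)) volume ^ k) * A) := step
      _ ≤ (S : ℝ≥0∞) * (c * ((C : ℝ≥0∞) * A ^ (k - 1) * B) * A) := by
            gcongr
            exact ih u hu h2u
      _ = ((S : ℝ≥0∞) * c * C) * (A ^ (k - 1) * A) * B := by ring
      _ ≤ (((S + 1) * c * C : ℝ≥0) : ℝ≥0∞) * A ^ (k + 1 - 1) * B := by
            rw [← pow_succ, Nat.sub_add_cancel hk, Nat.add_sub_cancel]
            push_cast
            gcongr
            exact le_self_add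


/-- Gagliardo–Nirenberg interpolation inequality in dimension 2 (with `j = 0`, `m = 1`,
`p = q = 2`, `θ = 1 - 2/r`): for every real `2 ≤ r < ∞` there is a constant `C > 0` such that
every smooth compactly supported `u : ℝ² → ℝ` satisfies
`‖u‖_{L^r} ≤ C ‖∇u‖_{L²}^(1 - 2/r) ‖u‖_{L²}^(2/r)`. -/
theorem gagliardo_nirenberg_dim_two (r : ℝ) (hr : 2 ≤ r) :
    ∃ C : ℝ, 0 < C ∧
      ∀ u : EuclideanSpace ℝ (Fin 2) → ℝ, ContDiff ℝ (⊤ : ℕ∞) u → HasCompactSupport u →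
        eLpNorm u (ENNReal.ofReal r) volume ≤
          ENNReal.ofReal C * eLpNorm (fun x => ‖fderiv ℝ u x‖) 2 volume ^ (1 - 2 / r) *
            eLpNorm u 2 volume ^ (2 / r) := by
  rcases eq_or_lt_of_le hr with heq | hlt
  · refine ⟨1, one_pos, fun u hu h2u => ?_⟩
    rw [← heq]
    norm_num
  · -- 2 < r
    have hr0 : (0 : ℝ) < r := by linarith
    set K : ℕ := ⌈r⌉₊ + 1 with hK
    set k : ℝ := (K : ℝ) with hkdef
    have hrk : r < k := by
      rw [hkdef, hK]; push_cast; linarith [Nat.le_ceil r]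
    have hk1 : (1 : ℝ) < k := by linarith
    have hkm : (0 : ℝ) < k - 1 := by linarith
    have hk0 : (0 : ℝ) < k := by linarith
    have hrK : r < 2 * k := by linarith
    set b : ℝ := (1 - 2 / r) * k / (k - 1) with hbdef
    have h2r : 2 / r < 1 := (div_lt_one hr0).2 hlt
    have h2r0 : 0 < 2 / r := by positivity
    have hb0 : 0 < b := by
      rw [hbdef]; apply div_pos (mul_pos (by linarith) hk0) hkm
    have hb1 : b < 1 := by
      rw [hbdef, div_lt_one hkm]
      have h : (1 - 2 / r) * k * r = (r - 2) * k := by field_simp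
      nlinarith
    have ha : 0 < 1 - b := by linarith
    have hkey : 1 / r = (1 - b) / 2 + b / (2 * k) := by
      rw [hbdef]; field_simp; ring
    obtain ⟨C, hC, hmain⟩ := gn_even K (by omega)
    refine ⟨max 1 ((C : ℝ) ^ (b / k)), lt_of_lt_of_le one_pos (le_max_left _ _),
      fun u hu h2u => ?_⟩
    rw [eLpNorm_norm (fderiv ℝ u)]
    set A := eLpNorm (fderiv ℝ u) 2 volume with hA
    set B := eLpNorm u 2 volume with hB
    set X := eLpNorm u (2 * (K : ℝ≥0∞)) volume with hX
    by_cases hB0 : B = 0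
    · have hu0 : u =ᵐ[volume] 0 :=
        (eLpNorm_eq_zero_iff hu.continuous.aestronglyMeasurable (by norm_num)).1 hB0
      calc eLpNorm u (ENNReal.ofReal r) volume = 0 := by
            rw [eLpNorm_congr_ae hu0, eLpNorm_zero]
        _ ≤ _ := zero_le
    have hBtop : B ≠ ⊤ :=
      (Continuous.memLp_of_hasCompactSupport (p := 2) hu.continuous h2u).2.ne
    set φ : EuclideanSpace ℝ (Fin 2) → ℝ := fun x => |u x| ^ (1 - b) with hφdef
    set ψ : EuclideanSpace ℝ (Fin 2) → ℝ := fun x => |u x| ^ b with hψdef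
    have hEq : eLpNorm u (ENNReal.ofReal r) volume = eLpNorm (φ • ψ) (ENNReal.ofReal r) volume :=
      eLpNorm_congr_norm_ae (Filter.Eventually.of_forall fun x => by
        show ‖u x‖ = ‖φ x • ψ x‖
        rw [smul_eq_mul, Real.norm_eq_abs, Real.norm_eq_abs, hφdef, hψdef,
          abs_of_nonneg (mul_nonneg (Real.rpow_nonneg (abs_nonneg _) _)
            (Real.rpow_nonneg (abs_nonneg _) _)),
          ← Real.rpow_add' (abs_nonneg _) (by norm_num), sub_add_cancel, Real.rpow_one])
    have hqr : (1 : ℝ≥0∞) / ENNReal.ofReal r =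
        1 / ENNReal.ofReal (2 / (1 - b)) + 1 / ENNReal.ofReal (2 * k / b) := by
      rw [one_div, one_div, one_div, ← ENNReal.ofReal_inv_of_pos hr0,
        ← ENNReal.ofReal_inv_of_pos (by positivity), ← ENNReal.ofReal_inv_of_pos (by positivity),
        ← ENNReal.ofReal_add (by positivity) (by positivity)]
      congr 1
      rw [inv_div, inv_div, ← one_div]
      exact hkey
    have hφmeas : AEStronglyMeasurable φ volume :=
      (hu.continuous.abs.rpow_const (fun x => Or.inr ha.le)).aestronglyMeasurable
    have hψmeas : AEStronglyMeasurable ψ volume :=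
      (hu.continuous.abs.rpow_const (fun x => Or.inr hb0.le)).aestronglyMeasurable
    have hHolder := eLpNorm_smul_le_mul_eLpNorm hψmeas hφmeas (hpqr := ⟨by simpa only [one_div] using hqr.symm⟩)
    have hφn : eLpNorm φ (ENNReal.ofReal (2 / (1 - b))) volume = B ^ (1 - b) := by
      have h := eLpNorm_norm_rpow (p := ENNReal.ofReal (2 / (1 - b))) (μ := volume) u ha
      simp only [Real.norm_eq_abs] at h
      rw [hφdef]
      rw [h, ← ENNReal.ofReal_mul (by positivity), div_mul_cancel₀ _ (ne_of_gt ha),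
        ENNReal.ofReal_ofNat, hB]
    have hψn : eLpNorm ψ (ENNReal.ofReal (2 * k / b)) volume = X ^ b := by
      have h := eLpNorm_norm_rpow (p := ENNReal.ofReal (2 * k / b)) (μ := volume) u hb0
      simp only [Real.norm_eq_abs] at h
      rw [hψdef]
      rw [h, ← ENNReal.ofReal_mul (by positivity), div_mul_cancel₀ _ (ne_of_gt hb0),
        ENNReal.ofReal_mul (by norm_num : (0:ℝ) ≤ 2), ENNReal.ofReal_ofNat,
        hkdef, ENNReal.ofReal_natCast, hX]
    have h1 : X ^ b = (X ^ K) ^ (b / k) := by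
      rw [← ENNReal.rpow_natCast X K, ← ENNReal.rpow_mul]
      congr 1
      rw [← hkdef]; field_simp
    have h2 : (X ^ K) ^ (b / k) ≤ ((C : ℝ≥0∞) * A ^ (K - 1) * B) ^ (b / k) :=
      ENNReal.rpow_le_rpow (hmain u hu h2u) (by positivity)
    have h3 : ((C : ℝ≥0∞) * A ^ (K - 1) * B) ^ (b / k) =
        (C : ℝ≥0∞) ^ (b / k) * A ^ (1 - 2 / r) * B ^ (b / k) := by
      rw [ENNReal.mul_rpow_of_nonneg _ _ (by positivity),
        ENNReal.mul_rpow_of_nonneg _ _ (by positivity),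
        ← ENNReal.rpow_natCast A (K - 1), ← ENNReal.rpow_mul]
      congr 3
      rw [Nat.cast_sub (by omega : 1 ≤ K), Nat.cast_one, ← hkdef, hbdef]
      field_simp
    have hCb : (C : ℝ≥0∞) ^ (b / k) = ENNReal.ofReal ((C : ℝ) ^ (b / k)) := by
      rw [← ENNReal.ofReal_coe_nnreal, ENNReal.ofReal_rpow_of_pos (by exact_mod_cast hC)]
    calc eLpNorm u (ENNReal.ofReal r) volume
        = eLpNorm (φ • ψ) (ENNReal.ofReal r) volume := hEq
      _ ≤ eLpNorm φ (ENNReal.ofReal (2 / (1 - b))) volume *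
            eLpNorm ψ (ENNReal.ofReal (2 * k / b)) volume := hHolder
      _ = B ^ (1 - b) * X ^ b := by rw [hφn, hψn]
      _ ≤ B ^ (1 - b) * ((C : ℝ≥0∞) ^ (b / k) * A ^ (1 - 2 / r) * B ^ (b / k)) :=
            mul_le_mul_right ((h1.trans_le h2).trans_eq h3) _
      _ = (C : ℝ≥0∞) ^ (b / k) * A ^ (1 - 2 / r) * (B ^ (1 - b) * B ^ (b / k)) := by ring
      _ = (C : ℝ≥0∞) ^ (b / k) * A ^ (1 - 2 / r) * B ^ (2 / r) := by
            have hexp : 1 - b + b / k = 2 / r := by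
              rw [hbdef]; field_simp; ring
            rw [← ENNReal.rpow_add _ _ hB0 hBtop, hexp]
      _ ≤ ENNReal.ofReal (max 1 ((C : ℝ) ^ (b / k))) * A ^ (1 - 2 / r) * B ^ (2 / r) := by
            rw [hCb]
            exact mul_le_mul_left (mul_le_mul_left
              (ENNReal.ofReal_le_ofReal (le_max_right _ _)) _) _
end
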